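/- arXiv:math/0604174 — 2 statements merged into one kernel-verified Lean document; each statement's English description precedes it below -/
import Mathlib

section
/- Let X₁ and X₂ be forests, let A be a subset of X = X₁ × X₂ (with the componentwise order), and let A₁ be the set of all points x ∈ X such that x = y ∨ z for some c-comparable y, z ∈ A. If y, z ∈ A₁ are c-comparable, then y ∨ z also belongs to A₁. -/
/-- A partial order is a *forest* if for every point `x`, the set `{y : x ≤ y}`
is finite and totally ordered. -/
def IsForest (α : Type*) [Preorder α] : Prop :=
  ∀ x : α, (Set.Ici x).Finite ∧ IsChain (· ≤ ·) (Set.Ici x)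

open Classical in
/-- The maximum of two comparable elements of a partial order. -/
noncomputable def pmax {α : Type*} [Preorder α] (a b : α) : α :=
  if a ≤ b then b else a

/-- Two points of a product of two partial orders are coordinate-wise comparable. -/
def CComp2 {α β : Type*} [Preorder α] [Preorder β] (x y : α × β) : Prop :=
  (x.1 ≤ y.1 ∨ y.1 ≤ x.1) ∧ (x.2 ≤ y.2 ∨ y.2 ≤ x.2)

/-- The componentwise maximum of two (c-comparable) points of a product. -/
noncomputable def Vee2 {α β : Type*} [Preorder α] [Preorder β] (x y : α × β) : α × β :=
  (pmax x.1 y.1, pmax x.2 y.2)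

lemma le_pmax_left {α : Type*} [PartialOrder α] (a b : α) : a ≤ pmax a b := by
  unfold pmax; split_ifs with h
  · exact h
  · exact le_refl a

lemma le_pmax_right {α : Type*} [PartialOrder α] {a b : α} (h : a ≤ b ∨ b ≤ a) :
    b ≤ pmax a b := by
  unfold pmax; split_ifs with h'
  · exact le_refl b
  · exact h.resolve_left h'

lemma pmax_eq_or {α : Type*} [PartialOrder α] (a b : α) :
    pmax a b = a ∨ pmax a b = b := by
  unfold pmax; split_ifs <;> simp

lemma pmax_eq_left {α : Type*} [PartialOrder α] {a b : α} (h : b ≤ a) :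
    pmax a b = a := by
  unfold pmax; split_ifs with h'
  · exact le_antisymm h h'
  · rfl

lemma pmax_eq_right {α : Type*} [PartialOrder α] {a b : α} (h : a ≤ b) :
    pmax a b = b := by
  unfold pmax; rw [if_pos h]

/-- If `X₁, X₂` are forests, `A ⊆ X₁ × X₂`, and `A₁` is the set of joins of pairs of
c-comparable points of `A`, then `A₁` is itself stable under joins of c-comparable
pairs: for c-comparable `y, z ∈ A₁`, the join `y ∨ z` belongs to `A₁`. -/
theorem statement1 {α β : Type*} [PartialOrder α] [PartialOrder β]
    (hα : IsForest α) (hβ : IsForest β) (A : Set (α × β))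
    (A₁ : Set (α × β))
    (hA₁ : A₁ = {x | ∃ u ∈ A, ∃ v ∈ A, CComp2 u v ∧ x = Vee2 u v})
    (y z : α × β) (hy : y ∈ A₁) (hz : z ∈ A₁) (hyz : CComp2 y z) :
    Vee2 y z ∈ A₁ := by
  subst hA₁
  obtain ⟨u, hu, v, hv, huv, hyv⟩ := hy
  obtain ⟨u', hu', v', hv', huv', hzv⟩ := hz
  set w := Vee2 y z with hw
  have hw1 : w.1 = pmax y.1 z.1 := rfl
  have hw2 : w.2 = pmax y.2 z.2 := rfl
  have hy1 : y.1 = pmax u.1 v.1 := by rw [hyv]; rfl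
  have hy2 : y.2 = pmax u.2 v.2 := by rw [hyv]; rfl
  have hz1 : z.1 = pmax u'.1 v'.1 := by rw [hzv]; rfl
  have hz2 : z.2 = pmax u'.2 v'.2 := by rw [hzv]; rfl
  -- all four first coordinates are ≤ w.1, second coordinates ≤ w.2
  have hyw1 : y.1 ≤ w.1 := le_pmax_left _ _
  have hzw1 : z.1 ≤ w.1 := le_pmax_right hyz.1
  have hyw2 : y.2 ≤ w.2 := le_pmax_left _ _
  have hzw2 : z.2 ≤ w.2 := le_pmax_right hyz.2
  have hu1 : u.1 ≤ w.1 := le_trans (hy1 ▸ le_pmax_left _ _) hyw1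
  have hv1 : v.1 ≤ w.1 := le_trans (hy1 ▸ le_pmax_right huv.1) hyw1
  have hu'1 : u'.1 ≤ w.1 := le_trans (hz1 ▸ le_pmax_left _ _) hzw1
  have hv'1 : v'.1 ≤ w.1 := le_trans (hz1 ▸ le_pmax_right huv'.1) hzw1
  have hu2 : u.2 ≤ w.2 := le_trans (hy2 ▸ le_pmax_left _ _) hyw2
  have hv2 : v.2 ≤ w.2 := le_trans (hy2 ▸ le_pmax_right huv.2) hyw2
  have hu'2 : u'.2 ≤ w.2 := le_trans (hz2 ▸ le_pmax_left _ _) hzw2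
  have hv'2 : v'.2 ≤ w.2 := le_trans (hz2 ▸ le_pmax_right huv'.2) hzw2
  -- w.1 is attained by one of the four points
  have h1 : ∃ p ∈ A, p.1 = w.1 ∧ p.2 ≤ w.2 := by
    rcases pmax_eq_or y.1 z.1 with h | h
    · rw [hy1] at h
      rcases pmax_eq_or u.1 v.1 with h' | h'
      · exact ⟨u, hu, by rw [hw1, hy1, h, h'], hu2⟩
      · exact ⟨v, hv, by rw [hw1, hy1, h, h'], hv2⟩
    · rw [hz1] at h
      rcases pmax_eq_or u'.1 v'.1 with h' | h'
      · exact ⟨u', hu', by rw [hw1, hz1, h, h'], hu'2⟩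
      · exact ⟨v', hv', by rw [hw1, hz1, h, h'], hv'2⟩
  have h2 : ∃ q ∈ A, q.2 = w.2 ∧ q.1 ≤ w.1 := by
    rcases pmax_eq_or y.2 z.2 with h | h
    · rw [hy2] at h
      rcases pmax_eq_or u.2 v.2 with h' | h'
      · exact ⟨u, hu, by rw [hw2, hy2, h, h'], hu1⟩
      · exact ⟨v, hv, by rw [hw2, hy2, h, h'], hv1⟩
    · rw [hz2] at h
      rcases pmax_eq_or u'.2 v'.2 with h' | h'
      · exact ⟨u', hu', by rw [hw2, hz2, h, h'], hu'1⟩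
      · exact ⟨v', hv', by rw [hw2, hz2, h, h'], hv'1⟩
  obtain ⟨p, hpA, hp1, hp2⟩ := h1
  obtain ⟨q, hqA, hq2, hq1⟩ := h2
  have hq1' : q.1 ≤ p.1 := hp1 ▸ hq1
  have hp2' : p.2 ≤ q.2 := hq2 ▸ hp2
  refine ⟨p, hpA, q, hqA, ⟨Or.inr hq1', Or.inl hp2'⟩, ?_⟩
  have : Vee2 p q = (p.1, q.2) := by
    unfold Vee2
    rw [pmax_eq_left hq1', pmax_eq_right hp2']
  rw [this, hp1, hq2]
end

section
/- Let X₁, X₂, X₃ be forests and let x, y, z be three points of X = X₁ × X₂ × X₃ (with the componentwise order) such that x₁ ≥ y₁, x₁ ≥ z₁, y₂ ≥ x₂, y₂ ≥ z₂, z₃ ≥ x₃, z₃ ≥ y₃, and such that none of the pairs (y₁, z₁), (x₂, z₂), (x₃, y₃) consists of comparable elements. Then the three lower sets {u ∈ X : u ≤ x}, {u ∈ X : u ≤ y}, {u ∈ X : u ≤ z} are pairwise disjoint, and their union is the c.h-envelope of the set A = {x, y, z}. -/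
/-- Two points of a product of three partial orders are coordinate-wise comparable. -/
def CComp3 {α β γ : Type*} [Preorder α] [Preorder β] [Preorder γ] (x y : α × β × γ) : Prop :=
  (x.1 ≤ y.1 ∨ y.1 ≤ x.1) ∧ (x.2.1 ≤ y.2.1 ∨ y.2.1 ≤ x.2.1) ∧
    (x.2.2 ≤ y.2.2 ∨ y.2.2 ≤ x.2.2)

/-- The componentwise maximum of two (c-comparable) points of a triple product. -/
noncomputable def Vee3 {α β γ : Type*} [Preorder α] [Preorder β] [Preorder γ]
    (x y : α × β × γ) : α × β × γ :=
  (pmax x.1 y.1, pmax x.2.1 y.2.1, pmax x.2.2 y.2.2)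

/-- A subset of a triple product of partial orders is *concave* if it contains the
componentwise maximum of any two of its c-comparable points. -/
def IsConcave3 {α β γ : Type*} [Preorder α] [Preorder β] [Preorder γ]
    (A : Set (α × β × γ)) : Prop :=
  ∀ x ∈ A, ∀ y ∈ A, CComp3 x y → Vee3 x y ∈ A

/-- The c.h-envelope of `A`: the smallest hereditary (lower) concave set containing `A`. -/
def chEnv3 {α β γ : Type*} [Preorder α] [Preorder β] [Preorder γ]
    (A : Set (α × β × γ)) : Set (α × β × γ) :=
  ⋂₀ {B : Set (α × β × γ) | A ⊆ B ∧ IsLowerSet B ∧ IsConcave3 B}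

/-- In a forest, two elements with a common lower bound are comparable. -/
lemma forest_comp {α : Type*} [Preorder α] (h : IsForest α) {a b c : α}
    (ha : c ≤ a) (hb : c ≤ b) : a ≤ b ∨ b ≤ a := by
  rcases eq_or_ne a b with rfl | hne
  · exact Or.inl le_rfl
  · exact (h c).2 ha hb hne

/-- In a forest, if `p` and `q` are incomparable, no element below `p` is comparable
with an element below `q`. -/
lemma forest_no_common {α : Type*} [Preorder α] (h : IsForest α) {p q a b : α}
    (hp : a ≤ p) (hq : b ≤ q) (hab : a ≤ b ∨ b ≤ a)
    (hpq : ¬(p ≤ q ∨ q ≤ p)) : False := by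
  rcases hab with hab | hab
  · exact hpq (forest_comp h hp (hab.trans hq))
  · exact hpq (forest_comp h (hab.trans hp) hq)

lemma pmax_le {α : Type*} [Preorder α] {a b c : α} (ha : a ≤ c) (hb : b ≤ c) :
    pmax a b ≤ c := by
  unfold pmax; split <;> assumption

lemma le3 {α β γ : Type*} [Preorder α] [Preorder β] [Preorder γ] {u w : α × β × γ}
    (h : u ≤ w) : u.1 ≤ w.1 ∧ u.2.1 ≤ w.2.1 ∧ u.2.2 ≤ w.2.2 := by
  rw [Prod.le_def] at h
  obtain ⟨h1, h2⟩ := h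
  rw [Prod.le_def] at h2
  exact ⟨h1, h2.1, h2.2⟩

lemma Vee3_le {α β γ : Type*} [Preorder α] [Preorder β] [Preorder γ] {u v w : α × β × γ}
    (hu : u ≤ w) (hv : v ≤ w) : Vee3 u v ≤ w := by
  obtain ⟨hu1, hu2, hu3⟩ := le3 hu
  obtain ⟨hv1, hv2, hv3⟩ := le3 hv
  rw [Prod.le_def, Prod.le_def]
  exact ⟨pmax_le hu1 hv1, pmax_le hu2 hv2, pmax_le hu3 hv3⟩

/-- Example 2 of Appendix C: for forests `X₁, X₂, X₃` and points `x, y, z` with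
`x₁ ≥ y₁, z₁`, `y₂ ≥ x₂, z₂`, `z₃ ≥ x₃, y₃`, and none of the pairs `(y₁, z₁)`,
`(x₂, z₂)`, `(x₃, y₃)` comparable, the lower sets `{u ≤ x}`, `{u ≤ y}`, `{u ≤ z}`
are pairwise disjoint and their union is the c.h-envelope of `{x, y, z}`. -/
theorem statement3 {α β γ : Type*} [PartialOrder α] [PartialOrder β] [PartialOrder γ]
    (hα : IsForest α) (hβ : IsForest β) (hγ : IsForest γ)
    (x y z : α × β × γ)
    (h1 : y.1 ≤ x.1) (h2 : z.1 ≤ x.1)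
    (h3 : x.2.1 ≤ y.2.1) (h4 : z.2.1 ≤ y.2.1)
    (h5 : x.2.2 ≤ z.2.2) (h6 : y.2.2 ≤ z.2.2)
    (h7 : ¬(y.1 ≤ z.1 ∨ z.1 ≤ y.1))
    (h8 : ¬(x.2.1 ≤ z.2.1 ∨ z.2.1 ≤ x.2.1))
    (h9 : ¬(x.2.2 ≤ y.2.2 ∨ y.2.2 ≤ x.2.2)) :
    Disjoint (Set.Iic x) (Set.Iic y) ∧ Disjoint (Set.Iic x) (Set.Iic z) ∧
      Disjoint (Set.Iic y) (Set.Iic z) ∧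
      Set.Iic x ∪ Set.Iic y ∪ Set.Iic z = chEnv3 ({x, y, z} : Set (α × β × γ)) := by
  -- the three cross contradictions
  have cxy : ∀ u v : α × β × γ, u ≤ x → v ≤ y → (u.2.2 ≤ v.2.2 ∨ v.2.2 ≤ u.2.2) → False :=
    fun u v hu hv hc => forest_no_common hγ (le3 hu).2.2 (le3 hv).2.2 hc h9
  have cxz : ∀ u v : α × β × γ, u ≤ x → v ≤ z → (u.2.1 ≤ v.2.1 ∨ v.2.1 ≤ u.2.1) → False :=
    fun u v hu hv hc => forest_no_common hβ (le3 hu).2.1 (le3 hv).2.1 hc h8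
  have cyz : ∀ u v : α × β × γ, u ≤ y → v ≤ z → (u.1 ≤ v.1 ∨ v.1 ≤ u.1) → False :=
    fun u v hu hv hc => forest_no_common hα (le3 hu).1 (le3 hv).1 hc h7
  refine ⟨?_, ?_, ?_, ?_⟩
  · exact Set.disjoint_left.mpr fun u hu hv => cxy u u hu hv (Or.inl le_rfl)
  · exact Set.disjoint_left.mpr fun u hu hv => cxz u u hu hv (Or.inl le_rfl)
  · exact Set.disjoint_left.mpr fun u hu hv => cyz u u hu hv (Or.inl le_rfl)
  · apply subset_antisymm
    · intro u hu
      rw [chEnv3, Set.mem_sInter]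
      rintro B ⟨hAB, hlow, -⟩
      simp only [Set.mem_union, Set.mem_Iic] at hu
      rcases hu with (hu | hu) | hu
      · exact hlow hu (hAB (by simp))
      · exact hlow hu (hAB (by simp))
      · exact hlow hu (hAB (by simp))
    · apply Set.sInter_subset_of_mem
      refine ⟨?_, ?_, ?_⟩
      · rintro u (rfl | rfl | rfl) <;>
          simp only [Set.mem_union, Set.mem_Iic]
        · exact Or.inl (Or.inl le_rfl)
        · exact Or.inl (Or.inr le_rfl)
        · exact Or.inr le_rfl
      · exact ((isLowerSet_Iic x).union (isLowerSet_Iic y)).union (isLowerSet_Iic z)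
      · intro u hu v hv hcc
        simp only [Set.mem_union, Set.mem_Iic] at hu hv ⊢
        rcases hu with (hu | hu) | hu <;> rcases hv with (hv | hv) | hv
        · exact Or.inl (Or.inl (Vee3_le hu hv))
        · exact (cxy u v hu hv hcc.2.2).elim
        · exact (cxz u v hu hv hcc.2.1).elim
        · exact (cxy v u hv hu hcc.2.2.symm).elim
        · exact Or.inl (Or.inr (Vee3_le hu hv))
        · exact (cyz u v hu hv hcc.1).elim
        · exact (cxz v u hv hu hcc.2.1.symm).elim
        · exact (cyz v u hv hu hcc.1.symm).elim
        · exact Or.inr (Vee3_le hu hv)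
end
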